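/- arXiv:2205.07691 — 3 statements merged into one kernel-verified Lean document; each statement's English description precedes it below -/
import Mathlib

section
/- (Lemma 3.1, first identity) For all subsets P ⊆ Q ⊆ I₀ and all Λ, H ∈ V₀ one has θ_{P,Q}^Λ(H) = Σ_{S : P_Λ^Q ⊆ S ⊆ Q} (−1)^{|S ∖ P_Λ^Q|} τ_P^S(H). -/
open scoped Classical

noncomputable section

local notation "⟪" x ", " y "⟫" => @inner ℝ _ _ x y

variable {V : Type*} [NormedAddCommGroup V] [InnerProductSpace ℝ V] [FiniteDimensional ℝ V]
variable {I : Type*} [Fintype I] [DecidableEq I]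

/-- `lamProj lam P i` is the orthogonal projection `λ_{P,i}` of `λ_i` onto the orthogonal
complement of the span of `{λ_j : j ∈ P}`. -/
noncomputable def lamProj (lam : I → V) (P : Finset I) (i : I) : V :=
  (((Submodule.span ℝ (lam '' ↑P))ᗮ).orthogonalProjectionOnto (lam i) : V)

/-- `mu P Q i` (for `i ∈ Q \ P`) is the dual basis `μ_{P,i}^Q` of the basis
`Δ_P^Q = (λ_{P,i})_{i ∈ Q\P}` of the subspace `V_P^Q` it spans:  it is characterized by
membership in `V_P^Q` together with `⟪μ_{P,i}^Q, λ_{P,j}⟫ = δ_{ij}`. -/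
def IsDualSystem (lam : I → V) (mu : Finset I → Finset I → I → V) : Prop :=
  ∀ P Q : Finset I, P ⊆ Q → ∀ i ∈ Q \ P,
    mu P Q i ∈ Submodule.span ℝ (lamProj lam P '' ↑(Q \ P)) ∧
      ∀ j ∈ Q \ P, ⟪mu P Q i, lamProj lam P j⟫ = if i = j then 1 else 0

/-- The characteristic function `θ_{P,Q}^Λ`. -/
noncomputable def theta (lam : I → V) (mu : Finset I → Finset I → I → V) (Λ : V)
    (P Q : Finset I) (H : V) : ℤ :=
  if P ⊆ Q ∧ ∀ i ∈ Q \ P,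
      (0 < ⟪mu P Q i, Λ⟫ → ⟪lamProj lam P i, H⟫ ≤ 0) ∧
      (⟪mu P Q i, Λ⟫ ≤ 0 → 0 < ⟪lamProj lam P i, H⟫)
  then 1 else 0

/-- The characteristic function `θ̂_{P,Q}^Λ`. -/
noncomputable def thetaHat (lam : I → V) (mu : Finset I → Finset I → I → V) (Λ : V)
    (P Q : Finset I) (H : V) : ℤ :=
  if P ⊆ Q ∧ ∀ i ∈ Q \ P,
      (0 < ⟪lamProj lam P i, Λ⟫ → ⟪mu P Q i, H⟫ ≤ 0) ∧
      (⟪lamProj lam P i, Λ⟫ ≤ 0 → 0 < ⟪mu P Q i, H⟫)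
  then 1 else 0

/-- `b_{P,Q}^Λ`, the number of `i ∈ Q \ P` with `⟪μ_{P,i}^Q, Λ⟫ ≤ 0`. -/
noncomputable def bcard (mu : Finset I → Finset I → I → V) (Λ : V) (P Q : Finset I) : ℕ :=
  ((Q \ P).filter fun i => ⟪mu P Q i, Λ⟫ ≤ 0).card

/-- `b̂_{P,Q}^Λ`, the number of `i ∈ Q \ P` with `⟪λ_{P,i}, Λ⟫ ≤ 0`. -/
noncomputable def bhatcard (lam : I → V) (Λ : V) (P Q : Finset I) : ℕ :=
  ((Q \ P).filter fun i => ⟪lamProj lam P i, Λ⟫ ≤ 0).card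

/-- `η_{P,Q}^Λ = |P| + b_{P,Q}^Λ`. -/
noncomputable def eta (mu : Finset I → Finset I → I → V) (Λ : V) (P Q : Finset I) : ℕ :=
  P.card + bcard mu Λ P Q

/-- `η̂_{P,Q}^Λ = |P| + b̂_{P,Q}^Λ`. -/
noncomputable def etaHat (lam : I → V) (Λ : V) (P Q : Finset I) : ℕ :=
  P.card + bhatcard lam Λ P Q

/-- `P_Λ^Q = P ∪ {i ∈ Q\P : ⟪μ_{P,i}^Q, Λ⟫ ≤ 0}`. -/
noncomputable def PLam (mu : Finset I → Finset I → I → V) (Λ : V) (P Q : Finset I) : Finset I :=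
  P ∪ (Q \ P).filter fun i => ⟪mu P Q i, Λ⟫ ≤ 0

/-- `Q_P^Λ = P ∪ {i ∈ Q\P : ⟪λ_{P,i}, Λ⟫ > 0}`. -/
noncomputable def QLam (lam : I → V) (Λ : V) (P Q : Finset I) : Finset I :=
  P ∪ (Q \ P).filter fun i => 0 < ⟪lamProj lam P i, Λ⟫

/-- The basis is obtuse if `⟪λ_i, λ_j⟫ ≤ 0` for `i ≠ j`. -/
def Obtuse (lam : I → V) : Prop := ∀ i j : I, i ≠ j → ⟪lam i, lam j⟫ ≤ 0

/-- Lemma 3.1, first identity: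
`θ_{P,Q}^Λ = Σ_{P_Λ^Q ⊆ S ⊆ Q} (−1)^{|S ∖ P_Λ^Q|} τ_P^S` (recall `τ_P^S = θ_{P,S}^0`). -/
theorem langlands_lemma_3_1_first
    (b : Module.Basis I ℝ V) (mu : Finset I → Finset I → I → V) (hmu : IsDualSystem (⇑b) mu)
    (P Q : Finset I) (hPQ : P ⊆ Q) (Λ H : V) :
    theta (⇑b) mu Λ P Q H
      = ∑ S ∈ Finset.Icc (PLam mu Λ P Q) Q,
          (-1 : ℤ) ^ (S \ PLam mu Λ P Q).card * theta (⇑b) mu 0 P S H := by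
  classical
  set R := PLam mu Λ P Q with hR
  have hPR : P ⊆ R := Finset.subset_union_left
  have hRQ : R ⊆ Q :=
    Finset.union_subset hPQ ((Finset.filter_subset _ _).trans Finset.sdiff_subset)
  set f : I → Prop := fun i => 0 < ⟪lamProj (⇑b) P i, H⟫ with hf
  set c : I → ℤ := fun i => if f i then 1 else 0 with hc
  have hmemRP : ∀ i, i ∈ R \ P ↔ i ∈ Q \ P ∧ ⟪mu P Q i, Λ⟫ ≤ 0 := by
    intro i
    simp only [hR, PLam, Finset.mem_sdiff, Finset.mem_union, Finset.mem_filter]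
    tauto
  have hmemQR : ∀ i, i ∈ Q \ R ↔ i ∈ Q \ P ∧ 0 < ⟪mu P Q i, Λ⟫ := by
    intro i
    simp only [hR, PLam, Finset.mem_sdiff, Finset.mem_union, Finset.mem_filter, not_or, not_and,
      not_le]
    constructor
    · rintro ⟨hiQ, hiP, h2⟩
      exact ⟨⟨hiQ, hiP⟩, h2 ⟨hiQ, hiP⟩⟩
    · rintro ⟨⟨hiQ, hiP⟩, h2⟩
      exact ⟨hiQ, hiP, fun _ => h2⟩
  -- τ_P^S as a product of indicators
  have htau : ∀ S : Finset I, P ⊆ S → theta (⇑b) mu 0 P S H = ∏ i ∈ S \ P, c i := by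
    intro S hPS
    rw [hc, Finset.prod_boole]
    unfold theta
    congr 1
    simp only [inner_zero_right, lt_irrefl, le_refl, false_implies, true_implies, true_and,
      eq_iff_iff, and_iff_right hPS, hf]
  -- LHS as an indicator of the conjunction
  have hlhs : theta (⇑b) mu Λ P Q H
      = if (∀ i ∈ R \ P, f i) ∧ (∀ i ∈ Q \ R, ¬ f i) then (1 : ℤ) else 0 := by
    unfold theta
    refine if_congr ?_ rfl rfl
    rw [and_iff_right hPQ]
    constructor
    · intro h
      constructor
      · intro i hi
        rw [hmemRP] at hi
        exact (h i hi.1).2 hi.2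
      · intro i hi
        rw [hmemQR] at hi
        rw [hf, not_lt]
        exact (h i hi.1).1 hi.2
    · rintro ⟨h1, h2⟩ i hi
      constructor
      · intro hpos
        rw [← not_lt]
        exact h2 i ((hmemQR i).2 ⟨hi, hpos⟩)
      · intro hle
        exact h1 i ((hmemRP i).2 ⟨hi, hle⟩)
  rw [hlhs]; symm
  -- compute the RHS
  calc
    ∑ S ∈ Finset.Icc R Q, (-1 : ℤ) ^ (S \ R).card * theta (⇑b) mu 0 P S H
        = ∑ S ∈ Finset.Icc R Q, (∏ i ∈ R \ P, c i) * ∏ i ∈ S \ R, (-1) * c i := by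
          refine Finset.sum_congr rfl fun S hS => ?_
          rw [Finset.mem_Icc] at hS
          rw [htau S (hPR.trans hS.1), ← Finset.sdiff_union_sdiff_cancel hS.1 hPR,
            Finset.prod_union (Finset.disjoint_left.2 fun a ha hb =>
              (Finset.mem_sdiff.1 ha).2 (Finset.mem_sdiff.1 hb).1), Finset.prod_mul_distrib,
            Finset.prod_const]
          ring
    _ = (∏ i ∈ R \ P, c i) * ∑ T ∈ (Q \ R).powerset, ∏ i ∈ T, (-1) * c i := by
          rw [Finset.mul_sum]
          refine Finset.sum_nbij' (fun S => S \ R) (fun T => R ∪ T) ?_ ?_ ?_ ?_ ?_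
          · intro S hS
            rw [Finset.mem_Icc] at hS
            exact Finset.mem_powerset.2 (Finset.sdiff_subset_sdiff hS.2 le_rfl)
          · intro T hT
            rw [Finset.mem_powerset] at hT
            exact Finset.mem_Icc.2 ⟨Finset.subset_union_left,
              Finset.union_subset hRQ (hT.trans Finset.sdiff_subset)⟩
          · intro S hS
            rw [Finset.mem_Icc] at hS
            exact Finset.union_sdiff_of_subset hS.1
          · intro T hT
            rw [Finset.mem_powerset] at hT
            show (R ∪ T) \ R = T
            rw [Finset.union_sdiff_cancel_left
              (Finset.disjoint_left.2 fun a haR haT => (Finset.mem_sdiff.1 (hT haT)).2 haR)]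
          · intro S hS
            rfl
    _ = (∏ i ∈ R \ P, c i) * ∏ i ∈ Q \ R, ((-1) * c i + 1) := by
          rw [Finset.prod_add]
          simp
    _ = if (∀ i ∈ R \ P, f i) ∧ (∀ i ∈ Q \ R, ¬ f i) then (1 : ℤ) else 0 := by
          by_cases h1 : ∀ i ∈ R \ P, f i
          · have e1 : ∏ i ∈ R \ P, c i = 1 :=
              Finset.prod_eq_one fun i hi => by simp [hc, h1 i hi]
            by_cases h2 : ∀ i ∈ Q \ R, ¬ f i
            · have e2 : ∏ i ∈ Q \ R, ((-1) * c i + 1) = 1 :=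
                Finset.prod_eq_one fun i hi => by simp [hc, h2 i hi]
              rw [e1, e2, if_pos ⟨h1, h2⟩]; ring
            · push_neg at h2
              obtain ⟨i, hi, hfi⟩ := h2
              have e2 : ∏ i ∈ Q \ R, ((-1) * c i + 1) = 0 :=
                Finset.prod_eq_zero hi (by simp [hc, hfi])
              have hn : ¬ ((∀ i ∈ R \ P, f i) ∧ ∀ i ∈ Q \ R, ¬ f i) :=
                fun h => h.2 i hi hfi
              rw [e1, e2, if_neg hn]; ring
          · push_neg at h1
            obtain ⟨i, hi, hfi⟩ := h1
            have e1 : ∏ i ∈ R \ P, c i = 0 :=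
              Finset.prod_eq_zero hi (by simp [hc, hfi])
            have hn : ¬ ((∀ i ∈ R \ P, f i) ∧ ∀ i ∈ Q \ R, ¬ f i) :=
              fun h => hfi (h.1 i hi)
            rw [e1, if_neg hn]; ring
end
end

section
/- (Section 2 structure claims) For every ordered partition 𝔭 = (F¹, …, F^r) of I and every u ∈ {1, …, r}: one has the orthogonal direct sum decompositions U^{u−1} ⊕ W^u = U^u and V^u ⊕ W^u = V^{u−1}, where V^v = span{λ_i : i ∉ E^v}; consequently V = W¹ ⊕ ⋯ ⊕ W^r orthogonally. Moreover, for all i, j ∈ F^u one has ⟨μ_i, λ_j⟩ = ⟨μ_i, λ_{𝔭,j}⟩ = ⟨μ_{𝔭,i}, λ_j⟩ = ⟨μ_{𝔭,i}, λ_{𝔭,j}⟩, and the families (λ_{𝔭,i})_{i∈F^u} and (μ_{𝔭,i})_{i∈F^u} are bases of W^u that are dual to each other. -/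
open scoped Classical

noncomputable section

local notation "⟪" x ", " y "⟫" => @inner ℝ _ _ x y

/-- An ordered partition of the finite set `ttl`: a finite sequence `F 0, …, F (r-1)` of
nonempty pairwise disjoint finsets whose union is `ttl`.  (We index the parts by `Fin r`,
so the `u`-th part of the paper, `1 ≤ u ≤ r`, is `F (u-1)`.) -/
structure OrderedPartition (I : Type*) [DecidableEq I] (ttl : Finset I) where
  r : ℕ
  F : Fin r → Finset I
  nonempty : ∀ u, (F u).Nonempty
  disj : ∀ u v : Fin r, u ≠ v → Disjoint (F u) (F v)
  covers : Finset.univ.biUnion F = ttl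

namespace OrderedPartition

variable {V : Type*} [NormedAddCommGroup V] [InnerProductSpace ℝ V] [FiniteDimensional ℝ V]
variable {I : Type*} [Fintype I] [DecidableEq I] {ttl : Finset I}

/-- `E^v = F¹ ∪ ⋯ ∪ F^v` (1-indexed `v`). -/
def Epart (p : OrderedPartition I ttl) (v : ℕ) : Finset I :=
  Finset.univ.biUnion fun u : Fin p.r => if (u : ℕ) < v then p.F u else ∅

/-- The (1-indexed) index `u` of the part `F^u` containing `i` (and `0` if `i` is in no part). -/
def partIdx (p : OrderedPartition I ttl) (i : I) : ℕ :=
  ∑ u : Fin p.r, if i ∈ p.F u then (u : ℕ) + 1 else 0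

/-- `U^v`, the span of `{μ_i : i ∈ E^v}`. -/
def Uspace (p : OrderedPartition I ttl) (mu : I → V) (v : ℕ) : Submodule ℝ V :=
  Submodule.span ℝ (mu '' ↑(p.Epart v))

/-- `W^u` (1-indexed `u`), the orthogonal complement of `U^{u-1}` in `U^u`. -/
def Wspace (p : OrderedPartition I ttl) (mu : I → V) (u : ℕ) : Submodule ℝ V :=
  p.Uspace mu u ⊓ (p.Uspace mu (u - 1))ᗮ

/-- `λ_{𝔭,i}`, the orthogonal projection of `λ_i` onto `W^u` for `i ∈ F^u`. -/
def lamp (p : OrderedPartition I ttl) (lam mu : I → V) (i : I) : V :=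
  (Submodule.orthogonalProjectionOnto (p.Wspace mu (p.partIdx i)) (lam i) : V)

/-- `μ_{𝔭,i}`, the orthogonal projection of `μ_i` onto `W^u` for `i ∈ F^u`. -/
def mup (p : OrderedPartition I ttl) (mu : I → V) (i : I) : V :=
  (Submodule.orthogonalProjectionOnto (p.Wspace mu (p.partIdx i)) (mu i) : V)

/-- The characteristic function `φ_𝔭^Λ(H)`. -/
def phi (p : OrderedPartition I ttl) (lam mu : I → V) (Λ H : V) : ℤ :=
  if ∀ i ∈ ttl,
      (0 < ⟪p.mup mu i, Λ⟫ → ⟪p.lamp lam mu i, H⟫ ≤ 0) ∧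
      (⟪p.mup mu i, Λ⟫ ≤ 0 → 0 < ⟪p.lamp lam mu i, H⟫)
  then 1 else 0

/-- The characteristic function `ψ_𝔭^Λ(H)`. -/
def psi (p : OrderedPartition I ttl) (lam mu : I → V) (Λ H : V) : ℤ :=
  if ∀ i ∈ ttl,
      (p.partIdx i = 1 → 0 < ⟪p.lamp lam mu i, H⟫) ∧
      (p.partIdx i ≠ 1 →
        (0 < ⟪p.mup mu i, Λ⟫ → ⟪p.lamp lam mu i, H⟫ ≤ 0) ∧
        (⟪p.mup mu i, Λ⟫ ≤ 0 → 0 < ⟪p.lamp lam mu i, H⟫))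
  then 1 else 0

/-- `b_𝔭^Λ = #{i : ⟪μ_{𝔭,i}, Λ⟫ ≤ 0}`. -/
def bpart (p : OrderedPartition I ttl) (mu : I → V) (Λ : V) : ℕ :=
  (ttl.filter fun i => ⟪p.mup mu i, Λ⟫ ≤ 0).card

/-- `c_𝔭^Λ = #{i ∉ F¹ : ⟪μ_{𝔭,i}, Λ⟫ ≤ 0}`. -/
def cpart (p : OrderedPartition I ttl) (mu : I → V) (Λ : V) : ℕ :=
  (ttl.filter fun i => p.partIdx i ≠ 1 ∧ ⟪p.mup mu i, Λ⟫ ≤ 0).card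

/-- `α_𝔭^Λ = b_𝔭^Λ + Σ_{u=1}^{r} (a^u + 1)`. -/
def alphaP (p : OrderedPartition I ttl) (mu : I → V) (Λ : V) : ℕ :=
  p.bpart mu Λ + ∑ u : Fin p.r, ((p.F u).card + 1)

/-- `β_𝔭^Λ = 1 + c_𝔭^Λ + Σ_{u=2}^{r} (a^u + 1)`. -/
def betaP (p : OrderedPartition I ttl) (mu : I → V) (Λ : V) : ℕ :=
  1 + p.cpart mu Λ + ∑ u : Fin p.r, if 1 ≤ (u : ℕ) then (p.F u).card + 1 else 0

end OrderedPartition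

section Aux

open Finset Submodule FiniteDimensional

namespace OrderedPartition

variable {V : Type*} [NormedAddCommGroup V] [InnerProductSpace ℝ V] [FiniteDimensional ℝ V]
variable {I : Type*} [Fintype I] [DecidableEq I]
variable (p : OrderedPartition I (Finset.univ : Finset I))

lemma exists_part (i : I) : ∃ u : Fin p.r, i ∈ p.F u := by
  have h : i ∈ Finset.univ.biUnion p.F := by rw [p.covers]; exact Finset.mem_univ i
  simpa [Finset.mem_biUnion] using h

lemma partIdx_eq {u : Fin p.r} {i : I} (h : i ∈ p.F u) : p.partIdx i = (u : ℕ) + 1 := by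
  unfold partIdx
  rw [Finset.sum_eq_single u]
  · simp [h]
  · intro v _ hv
    have : i ∉ p.F v := Finset.disjoint_left.mp (p.disj u v (Ne.symm hv)) h
    simp [this]
  · simp

lemma mem_F_iff {u : Fin p.r} {i : I} : i ∈ p.F u ↔ p.partIdx i = (u : ℕ) + 1 := by
  constructor
  · exact p.partIdx_eq
  · intro h
    obtain ⟨w, hw⟩ := p.exists_part i
    have := p.partIdx_eq hw
    have : (w : ℕ) = (u : ℕ) := by omega
    rwa [show w = u from Fin.ext this] at hw

lemma mem_Epart {i : I} {v : ℕ} : i ∈ p.Epart v ↔ p.partIdx i ≤ v := by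
  obtain ⟨u, hu⟩ := p.exists_part i
  rw [p.partIdx_eq hu]
  unfold Epart
  simp only [Finset.mem_biUnion, Finset.mem_univ, true_and]
  constructor
  · rintro ⟨w, hw⟩
    by_cases h : (w : ℕ) < v
    · rw [if_pos h] at hw
      have : w = u := by
        by_contra hne
        exact (Finset.disjoint_left.mp (p.disj w u hne) hw) hu
      omega
    · rw [if_neg h] at hw; exact absurd hw (Finset.notMem_empty i)
  · intro h
    exact ⟨u, by rw [if_pos (by omega)]; exact hu⟩

lemma Epart_mono (p : OrderedPartition I (Finset.univ : Finset I)) {v w : ℕ} (h : v ≤ w) :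
    p.Epart v ⊆ p.Epart w := fun i hi => p.mem_Epart.mpr (le_trans (p.mem_Epart.mp hi) h)

lemma Epart_zero (p : OrderedPartition I (Finset.univ : Finset I)) : p.Epart 0 = ∅ := by
  ext i
  obtain ⟨u, hu⟩ := p.exists_part i
  simp [p.mem_Epart, p.partIdx_eq hu]

lemma Epart_last (p : OrderedPartition I (Finset.univ : Finset I)) :
    p.Epart p.r = Finset.univ := by
  ext i
  obtain ⟨u, hu⟩ := p.exists_part i
  simp [p.mem_Epart, p.partIdx_eq hu, Nat.succ_le_of_lt u.2]

lemma Epart_succ (p : OrderedPartition I (Finset.univ : Finset I)) (u : Fin p.r) :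
    p.Epart ((u : ℕ) + 1) = p.Epart (u : ℕ) ∪ p.F u := by
  ext i
  obtain ⟨w, hw⟩ := p.exists_part i
  simp only [Finset.mem_union, p.mem_Epart, p.partIdx_eq hw, p.mem_F_iff (u := u)]
  omega

lemma F_disjoint_Epart (p : OrderedPartition I (Finset.univ : Finset I)) (u : Fin p.r) :
    Disjoint (p.Epart (u : ℕ)) (p.F u) := by
  rw [Finset.disjoint_right]
  intro i hi
  simp [p.mem_Epart, p.partIdx_eq hi]

lemma card_Epart_succ (p : OrderedPartition I (Finset.univ : Finset I)) (u : Fin p.r) :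
    (p.Epart ((u : ℕ) + 1)).card = (p.Epart (u : ℕ)).card + (p.F u).card := by
  rw [p.Epart_succ u, Finset.card_union_of_disjoint (p.F_disjoint_Epart u)]

variable {b : Module.Basis I ℝ V} {mu : I → V}
  (hmu : ∀ i j : I, ⟪mu i, b j⟫ = if i = j then 1 else 0)

include hmu

lemma mu_li : LinearIndependent ℝ mu := by
  rw [Fintype.linearIndependent_iff]
  intro g hg j
  have h := congrArg (fun x => ⟪x, b j⟫) hg
  simpa [sum_inner, real_inner_smul_left, hmu, Finset.sum_ite_eq'] using h

lemma finrank_span_mu (s : Finset I) :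
    Module.finrank ℝ (Submodule.span ℝ (mu '' ↑s)) = s.card := by
  have h : LinearIndependent ℝ (fun x : {x // x ∈ s} => mu (x : I)) :=
    (mu_li hmu).comp _ Subtype.coe_injective
  have : (mu '' ↑s) = Set.range (fun x : {x // x ∈ s} => mu (x : I)) := by
    ext x; simp
  rw [this, finrank_span_eq_card h, Fintype.card_coe]

lemma span_mu_univ : Submodule.span ℝ (mu '' ↑(Finset.univ : Finset I)) = ⊤ := by
  apply Submodule.eq_top_of_finrank_eq
  rw [finrank_span_mu hmu, Module.finrank_eq_card_basis b, Finset.card_univ]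

omit hmu in
lemma mem_orthogonal_span {s : Set V} {x : V} (h : ∀ y ∈ s, ⟪y, x⟫ = 0) :
    x ∈ (Submodule.span ℝ s)ᗮ := by
  rw [Submodule.mem_orthogonal]
  intro y hy
  induction hy using Submodule.span_induction with
  | mem y hy => exact h y hy
  | zero => simp
  | add y z _ _ hy hz => simp [inner_add_left, hy, hz]
  | smul a y _ hy => simp [inner_smul_left, hy]

lemma finrank_Uspace (p : OrderedPartition I (Finset.univ : Finset I)) (v : ℕ) :
    Module.finrank ℝ (p.Uspace mu v) = (p.Epart v).card :=
  finrank_span_mu hmu _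

omit hmu in
lemma Uspace_mono (p : OrderedPartition I (Finset.univ : Finset I)) {v w : ℕ} (h : v ≤ w) :
    p.Uspace mu v ≤ p.Uspace mu w :=
  Submodule.span_mono (Set.image_mono (p.Epart_mono h))

lemma Vspace_eq (p : OrderedPartition I (Finset.univ : Finset I)) (v : ℕ) :
    Submodule.span ℝ (⇑b '' ↑(Finset.univ \ p.Epart v)) = (p.Uspace mu v)ᗮ := by
  have hle : Submodule.span ℝ (⇑b '' ↑(Finset.univ \ p.Epart v)) ≤ (p.Uspace mu v)ᗮ := by
    rw [Submodule.span_le]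
    rintro x ⟨j, hj, rfl⟩
    apply mem_orthogonal_span
    rintro y ⟨i, hi, rfl⟩
    simp only [Finset.coe_sdiff, Set.mem_diff, Finset.mem_coe] at hj
    have : i ≠ j := fun h => hj.2 (h ▸ hi)
    simp [hmu, this]
  apply Submodule.eq_of_le_of_finrank_le hle
  have h1 := Submodule.finrank_add_finrank_orthogonal (p.Uspace mu v)
  rw [finrank_Uspace hmu] at h1
  have h2 : Module.finrank ℝ
      (Submodule.span ℝ (⇑b '' ↑(Finset.univ \ p.Epart v))) = (Finset.univ \ p.Epart v).card := by
    have h : LinearIndependent ℝ (fun x : {x // x ∈ Finset.univ \ p.Epart v} => b (x : I)) :=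
      b.linearIndependent.comp _ Subtype.coe_injective
    have himg : (⇑b '' ↑(Finset.univ \ p.Epart v)) =
        Set.range (fun x : {x // x ∈ Finset.univ \ p.Epart v} => b (x : I)) := by
      ext x; simp
    rw [himg, finrank_span_eq_card h, Fintype.card_coe]
  rw [h2, Finset.card_sdiff_of_subset (Finset.subset_univ _), Finset.card_univ]
  rw [Module.finrank_eq_card_basis b] at h1
  omega

omit hmu in
lemma Wspace_succ (p : OrderedPartition I (Finset.univ : Finset I)) (w : ℕ) :
    p.Wspace mu (w + 1) = p.Uspace mu (w + 1) ⊓ (p.Uspace mu w)ᗮ := by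
  simp [Wspace]

omit hmu in
lemma sup_U_W (p : OrderedPartition I (Finset.univ : Finset I)) (u : Fin p.r) :
    p.Uspace mu (u : ℕ) ⊔ p.Wspace mu ((u : ℕ) + 1) = p.Uspace mu ((u : ℕ) + 1) := by
  rw [p.Wspace_succ, inf_comm]
  exact Submodule.sup_orthogonal_inf_of_hasOrthogonalProjection (p.Uspace_mono (Nat.le_succ _))

omit hmu in
lemma W_le_orth (p : OrderedPartition I (Finset.univ : Finset I)) (w : ℕ) :
    p.Wspace mu (w + 1) ≤ (p.Uspace mu w)ᗮ := by
  rw [p.Wspace_succ]; exact inf_le_right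

omit hmu in
lemma W_le_U (p : OrderedPartition I (Finset.univ : Finset I)) (w : ℕ) :
    p.Wspace mu (w + 1) ≤ p.Uspace mu (w + 1) := by
  rw [p.Wspace_succ]; exact inf_le_left

lemma finrank_Wspace (p : OrderedPartition I (Finset.univ : Finset I)) (u : Fin p.r) :
    Module.finrank ℝ (p.Wspace mu ((u : ℕ) + 1)) = (p.F u).card := by
  have hsup := p.sup_U_W (mu := mu) u
  have hinf : p.Uspace mu (u : ℕ) ⊓ p.Wspace mu ((u : ℕ) + 1) = ⊥ := by
    rw [eq_bot_iff]
    refine le_trans (inf_le_inf_left _ (p.W_le_orth (u : ℕ))) ?_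
    rw [(p.Uspace mu (u : ℕ)).inf_orthogonal_eq_bot]
  have h := Submodule.finrank_sup_add_finrank_inf_eq (p.Uspace mu (u : ℕ))
    (p.Wspace mu ((u : ℕ) + 1))
  rw [hsup, hinf, finrank_Uspace hmu, finrank_Uspace hmu, p.card_Epart_succ u,
    finrank_bot] at h
  omega

omit hmu in
lemma mu_mem_U (p : OrderedPartition I (Finset.univ : Finset I)) {u : Fin p.r} {i : I}
    (hi : i ∈ p.F u) : mu i ∈ p.Uspace mu ((u : ℕ) + 1) :=
  Submodule.subset_span ⟨i, by simp [p.mem_Epart, p.partIdx_eq hi], rfl⟩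

omit hmu in
lemma proj_congr {K K' : Submodule ℝ V} (h : K = K') (x : V) :
    ((orthogonalProjection K x : V)) = (orthogonalProjection K' x : V) := by
  subst h; rfl

omit hmu in
lemma mup_eq (p : OrderedPartition I (Finset.univ : Finset I)) {u : Fin p.r} {i : I}
    (hi : i ∈ p.F u) :
    p.mup mu i = (orthogonalProjection (p.Wspace mu ((u : ℕ) + 1)) (mu i) : V) :=
  proj_congr (by rw [p.partIdx_eq hi]) _

omit hmu in
lemma lamp_eq (p : OrderedPartition I (Finset.univ : Finset I)) (lam : I → V)
    {u : Fin p.r} {i : I} (hi : i ∈ p.F u) :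
    p.lamp lam mu i = (orthogonalProjection (p.Wspace mu ((u : ℕ) + 1)) (lam i) : V) :=
  proj_congr (by rw [p.partIdx_eq hi]) _

omit hmu in
lemma mup_mem_W (p : OrderedPartition I (Finset.univ : Finset I)) {u : Fin p.r} {i : I}
    (hi : i ∈ p.F u) : p.mup mu i ∈ p.Wspace mu ((u : ℕ) + 1) := by
  rw [p.mup_eq hi]
  exact SetLike.coe_mem _

omit hmu in
lemma lamp_mem_W (p : OrderedPartition I (Finset.univ : Finset I)) (lam : I → V)
    {u : Fin p.r} {i : I} (hi : i ∈ p.F u) :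
    p.lamp lam mu i ∈ p.Wspace mu ((u : ℕ) + 1) := by
  rw [p.lamp_eq lam hi]
  exact SetLike.coe_mem _

omit hmu in
lemma mup_decomp (p : OrderedPartition I (Finset.univ : Finset I)) {u : Fin p.r} {i : I}
    (hi : i ∈ p.F u) : mu i - p.mup mu i ∈ p.Uspace mu (u : ℕ) := by
  have hmem : mu i ∈ p.Uspace mu (u : ℕ) ⊔ p.Wspace mu ((u : ℕ) + 1) := by
    rw [p.sup_U_W u]; exact p.mu_mem_U hi
  rw [Submodule.mem_sup] at hmem
  obtain ⟨a, ha, w, hw, hsum⟩ := hmem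
  have haW : a ∈ (p.Wspace mu ((u : ℕ) + 1))ᗮ :=
    Submodule.orthogonal_le (p.W_le_orth (u : ℕ))
      ((p.Uspace mu (u : ℕ)).le_orthogonal_orthogonal ha)
  have hproj : p.mup mu i = w := by
    rw [p.mup_eq hi, ← hsum, map_add,
      Submodule.orthogonalProjectionOnto_apply_of_mem_orthogonal haW, zero_add]
    exact Submodule.starProjection_eq_self_iff.mpr hw
  rw [hproj, ← hsum]
  simpa using ha

lemma b_mem_orth (p : OrderedPartition I (Finset.univ : Finset I)) {u : Fin p.r} {j : I}
    (hj : j ∈ p.F u) : b j ∈ (p.Uspace mu (u : ℕ))ᗮ := by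
  rw [← Vspace_eq hmu p]
  exact Submodule.subset_span ⟨j, by simp [p.mem_Epart, p.partIdx_eq hj], rfl⟩

lemma pairing (p : OrderedPartition I (Finset.univ : Finset I)) {u : Fin p.r} {i j : I}
    (hi : i ∈ p.F u) (hj : j ∈ p.F u) :
    ⟪p.mup mu i, b j⟫ = ⟪mu i, b j⟫ ∧ ⟪mu i, p.lamp (⇑b) mu j⟫ = ⟪mu i, b j⟫ ∧
    ⟪p.mup mu i, p.lamp (⇑b) mu j⟫ = ⟪mu i, b j⟫ := by
  have ha : mu i - p.mup mu i ∈ p.Uspace mu (u : ℕ) := p.mup_decomp hi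
  have hbj := b_mem_orth hmu p hj
  have h1 : ⟪p.mup mu i, b j⟫ = ⟪mu i, b j⟫ := by
    have h0 : ⟪mu i - p.mup mu i, b j⟫ = 0 :=
      (Submodule.mem_orthogonal _ _).mp hbj _ ha
    rw [inner_sub_left] at h0
    linarith
  have hz : b j - p.lamp (⇑b) mu j ∈ (p.Wspace mu ((u : ℕ) + 1))ᗮ := by
    rw [p.lamp_eq (⇑b) hj]
    exact Submodule.sub_starProjection_mem_orthogonal _
  have h3 : ⟪p.mup mu i, p.lamp (⇑b) mu j⟫ = ⟪mu i, b j⟫ := by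
    have h0 : ⟪p.mup mu i, b j - p.lamp (⇑b) mu j⟫ = 0 :=
      (Submodule.mem_orthogonal _ _).mp hz _ (p.mup_mem_W hi)
    rw [inner_sub_right] at h0
    linarith
  refine ⟨h1, ?_, h3⟩
  have hlW : p.lamp (⇑b) mu j ∈ (p.Uspace mu (u : ℕ))ᗮ :=
    p.W_le_orth (u : ℕ) (p.lamp_mem_W (⇑b) hj)
  have h0 : ⟪mu i - p.mup mu i, p.lamp (⇑b) mu j⟫ = 0 :=
    (Submodule.mem_orthogonal _ _).mp hlW _ ha
  rw [inner_sub_left] at h0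
  linarith

lemma pairing_delta (p : OrderedPartition I (Finset.univ : Finset I)) {u : Fin p.r} {i j : I}
    (hi : i ∈ p.F u) (hj : j ∈ p.F u) :
    ⟪p.mup mu i, p.lamp (⇑b) mu j⟫ = if i = j then 1 else 0 := by
  rw [(pairing hmu p hi hj).2.2, hmu]

lemma lamp_li (p : OrderedPartition I (Finset.univ : Finset I)) (u : Fin p.r) :
    LinearIndependent ℝ (fun j : {x // x ∈ p.F u} => p.lamp (⇑b) mu (j : I)) := by
  rw [Fintype.linearIndependent_iff]
  intro g hg i
  have h := congrArg (fun x => ⟪p.mup mu (i : I), x⟫) hg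
  simp only [inner_sum, real_inner_smul_right, inner_zero_right] at h
  rw [Finset.sum_eq_single i] at h
  · rw [pairing_delta hmu p i.2 i.2] at h
    simpa using h
  · intro j _ hji
    rw [pairing_delta hmu p i.2 j.2, if_neg (fun hc => hji (Subtype.ext hc.symm))]
    ring
  · simp

lemma mup_li (p : OrderedPartition I (Finset.univ : Finset I)) (u : Fin p.r) :
    LinearIndependent ℝ (fun j : {x // x ∈ p.F u} => p.mup mu (j : I)) := by
  rw [Fintype.linearIndependent_iff]
  intro g hg i
  have h := congrArg (fun x => ⟪x, p.lamp (⇑b) mu (i : I)⟫) hg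
  simp only [sum_inner, real_inner_smul_left, inner_zero_left] at h
  rw [Finset.sum_eq_single i] at h
  · rw [pairing_delta hmu p i.2 i.2] at h
    simpa using h
  · intro j _ hji
    rw [pairing_delta hmu p j.2 i.2, if_neg (fun hc => hji (Subtype.ext hc))]
    ring
  · simp

lemma span_lamp (p : OrderedPartition I (Finset.univ : Finset I)) (u : Fin p.r) :
    Submodule.span ℝ (p.lamp (⇑b) mu '' ↑(p.F u)) = p.Wspace mu ((u : ℕ) + 1) := by
  have hle : Submodule.span ℝ (p.lamp (⇑b) mu '' ↑(p.F u)) ≤ p.Wspace mu ((u : ℕ) + 1) := by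
    rw [Submodule.span_le]
    rintro x ⟨j, hj, rfl⟩
    exact p.lamp_mem_W (⇑b) hj
  refine Submodule.eq_of_le_of_finrank_le hle ?_
  rw [finrank_Wspace hmu]
  have himg : (p.lamp (⇑b) mu '' ↑(p.F u)) =
      Set.range (fun x : {x // x ∈ p.F u} => p.lamp (⇑b) mu (x : I)) := by
    ext x; simp
  rw [himg, finrank_span_eq_card (lamp_li hmu p u), Fintype.card_coe]

lemma span_mup (p : OrderedPartition I (Finset.univ : Finset I)) (u : Fin p.r) :
    Submodule.span ℝ (p.mup mu '' ↑(p.F u)) = p.Wspace mu ((u : ℕ) + 1) := by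
  have hle : Submodule.span ℝ (p.mup mu '' ↑(p.F u)) ≤ p.Wspace mu ((u : ℕ) + 1) := by
    rw [Submodule.span_le]
    rintro x ⟨j, hj, rfl⟩
    exact p.mup_mem_W hj
  refine Submodule.eq_of_le_of_finrank_le hle ?_
  rw [finrank_Wspace hmu]
  have himg : (p.mup mu '' ↑(p.F u)) =
      Set.range (fun x : {x // x ∈ p.F u} => p.mup mu (x : I)) := by
    ext x; simp
  rw [himg, finrank_span_eq_card (mup_li hmu p u), Fintype.card_coe]

lemma Vdecomp (p : OrderedPartition I (Finset.univ : Finset I)) (u : Fin p.r) :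
    Submodule.span ℝ (⇑b '' ↑(Finset.univ \ p.Epart ((u : ℕ) + 1))) ⊔ p.Wspace mu ((u : ℕ) + 1)
      = Submodule.span ℝ (⇑b '' ↑(Finset.univ \ p.Epart (u : ℕ))) := by
  rw [Vspace_eq hmu p, Vspace_eq hmu p]
  have h := Submodule.sup_orthogonal_inf_of_hasOrthogonalProjection
    (Submodule.orthogonal_le (p.Uspace_mono (mu := mu) (Nat.le_succ (u : ℕ))))
  rwa [Submodule.orthogonal_orthogonal, ← p.Wspace_succ] at h

lemma iSup_W (p : OrderedPartition I (Finset.univ : Finset I)) :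
    (⨆ u : Fin p.r, p.Wspace mu ((u : ℕ) + 1)) = ⊤ := by
  have key : ∀ v : ℕ, v ≤ p.r →
      p.Uspace mu v ≤ ⨆ u : Fin p.r, p.Wspace mu ((u : ℕ) + 1) := by
    intro v
    induction v with
    | zero => intro _; rw [Uspace, p.Epart_zero]; simp
    | succ v ih =>
      intro hv
      have hvr : v < p.r := hv
      exact le_trans (p.sup_U_W ⟨v, hvr⟩).ge
        (sup_le (ih (le_of_lt hvr)) (le_iSup_of_le ⟨v, hvr⟩ le_rfl))
  have htop : p.Uspace mu p.r = ⊤ := by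
    rw [Uspace, p.Epart_last]; exact span_mu_univ hmu
  exact top_unique (htop ▸ key p.r le_rfl)

omit hmu in
lemma W_orth (p : OrderedPartition I (Finset.univ : Finset I)) {u v : Fin p.r}
    (h : (u : ℕ) < (v : ℕ)) {x y : V}
    (hx : x ∈ p.Wspace mu ((u : ℕ) + 1)) (hy : y ∈ p.Wspace mu ((v : ℕ) + 1)) :
    ⟪x, y⟫ = 0 := by
  have hxU : x ∈ p.Uspace mu (v : ℕ) := p.Uspace_mono (by omega) (p.W_le_U _ hx)
  exact (Submodule.mem_orthogonal _ _).mp (p.W_le_orth _ hy) x hxU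

end OrderedPartition

end Aux



/-- Section 2 structure claims: for each part `F^u` of an ordered partition (here `u : Fin r`
denotes the part `F^{u+1}` of the paper, whose 1-indexed number is `u+1`) one has the orthogonal
decompositions `U^{u-1} ⊕ W^u = U^u` and `V^u ⊕ W^u = V^{u-1}`, globally `V = W¹ ⊕ ⋯ ⊕ W^r`
orthogonally, the compatibility of the pairings `⟪μ_i, λ_j⟫ = ⟪μ_i, λ_{𝔭,j}⟫ = ⟪μ_{𝔭,i}, λ_j⟫
= ⟪μ_{𝔭,i}, λ_{𝔭,j}⟫` for `i, j ∈ F^u`, and `(λ_{𝔭,i})_{i∈F^u}`, `(μ_{𝔭,i})_{i∈F^u}` are dual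
bases of `W^u`. -/
theorem ordered_partition_structure
    {V : Type*} [NormedAddCommGroup V] [InnerProductSpace ℝ V] [FiniteDimensional ℝ V]
    {I : Type*} [Fintype I] [DecidableEq I] [Nonempty I]
    (b : Module.Basis I ℝ V) (mu : I → V)
    (hmu : ∀ i j : I, ⟪mu i, b j⟫ = if i = j then 1 else 0)
    (p : OrderedPartition I (Finset.univ : Finset I)) :
    (∀ u : Fin p.r,
      -- `U^{u-1} ⊕ W^u = U^u`, orthogonally
      (p.Uspace mu (u : ℕ) ⊔ p.Wspace mu ((u : ℕ) + 1) = p.Uspace mu ((u : ℕ) + 1)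
        ∧ ∀ x ∈ p.Wspace mu ((u : ℕ) + 1), ∀ y ∈ p.Uspace mu (u : ℕ), ⟪x, y⟫ = 0)
      -- `V^u ⊕ W^u = V^{u-1}`, orthogonally, where `V^v = span{λ_i : i ∉ E^v}`
      ∧ (Submodule.span ℝ (⇑b '' ↑(Finset.univ \ p.Epart ((u : ℕ) + 1)))
            ⊔ p.Wspace mu ((u : ℕ) + 1)
          = Submodule.span ℝ (⇑b '' ↑(Finset.univ \ p.Epart (u : ℕ)))
        ∧ ∀ x ∈ p.Wspace mu ((u : ℕ) + 1),
            ∀ y ∈ Submodule.span ℝ (⇑b '' ↑(Finset.univ \ p.Epart ((u : ℕ) + 1))), ⟪x, y⟫ = 0)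
      -- compatibility of the pairings for `i, j ∈ F^u`
      ∧ (∀ i ∈ p.F u, ∀ j ∈ p.F u,
          ⟪mu i, b j⟫ = ⟪mu i, p.lamp (⇑b) mu j⟫
          ∧ ⟪mu i, b j⟫ = ⟪p.mup mu i, b j⟫
          ∧ ⟪mu i, b j⟫ = ⟪p.mup mu i, p.lamp (⇑b) mu j⟫)
      -- `(λ_{𝔭,i})_{i ∈ F^u}` and `(μ_{𝔭,i})_{i ∈ F^u}` are dual bases of `W^u`
      ∧ (Submodule.span ℝ (p.lamp (⇑b) mu '' ↑(p.F u)) = p.Wspace mu ((u : ℕ) + 1)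
        ∧ Submodule.span ℝ (p.mup mu '' ↑(p.F u)) = p.Wspace mu ((u : ℕ) + 1)
        ∧ LinearIndependent ℝ (fun j : {x // x ∈ p.F u} => p.lamp (⇑b) mu (j : I))
        ∧ LinearIndependent ℝ (fun j : {x // x ∈ p.F u} => p.mup mu (j : I))
        ∧ ∀ i ∈ p.F u, ∀ j ∈ p.F u,
            ⟪p.mup mu i, p.lamp (⇑b) mu j⟫ = if i = j then 1 else 0))
    -- `V = W¹ ⊕ ⋯ ⊕ W^r`, orthogonally
    ∧ (⨆ u : Fin p.r, p.Wspace mu ((u : ℕ) + 1)) = ⊤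
    ∧ (∀ u v : Fin p.r, u ≠ v →
        ∀ x ∈ p.Wspace mu ((u : ℕ) + 1), ∀ y ∈ p.Wspace mu ((v : ℕ) + 1), ⟪x, y⟫ = 0) := by
    classical
  refine ⟨fun u => ⟨⟨p.sup_U_W u, ?_⟩, ⟨OrderedPartition.Vdecomp hmu p u, ?_⟩, ?_, ?_⟩,
    OrderedPartition.iSup_W hmu p, ?_⟩
  · -- orthogonality W ⊥ U^u
    intro x hx y hy
    rw [real_inner_comm]
    exact (Submodule.mem_orthogonal _ _).mp (p.W_le_orth _ hx) y hy
  · -- orthogonality W ⊥ V^{u+1}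
    intro x hx y hy
    rw [OrderedPartition.Vspace_eq hmu p] at hy
    exact (Submodule.mem_orthogonal _ _).mp hy x (p.W_le_U _ hx)
  · -- pairings
    intro i hi j hj
    obtain ⟨h1, h2, h3⟩ := OrderedPartition.pairing hmu p hi hj
    exact ⟨h2.symm, h1.symm, h3.symm⟩
  · -- dual bases
    exact ⟨OrderedPartition.span_lamp hmu p u, OrderedPartition.span_mup hmu p u,
      OrderedPartition.lamp_li hmu p u, OrderedPartition.mup_li hmu p u,
      fun i hi j hj => OrderedPartition.pairing_delta hmu p hi hj⟩
  · -- mutual orthogonality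
    intro u v huv x hx y hy
    have hne : (u : ℕ) ≠ (v : ℕ) := fun h => huv (Fin.ext h)
    rcases hne.lt_or_gt with h | h
    · exact OrderedPartition.W_orth p h hx hy
    · rw [real_inner_comm]
      exact OrderedPartition.W_orth p h hy hx
end
end

section
/- (Dual of an obtuse basis) Let (λ_i)_{i∈I} be an obtuse basis of a finite-dimensional real inner product space V, with dual basis (μ_i)_{i∈I}. Then ⟨μ_i, μ_j⟩ ≥ 0 for all i, j ∈ I; consequently, if Λ ∈ V satisfies ⟨λ_i, Λ⟩ ≤ 0 for every i ∈ I (i.e. −Λ lies in the closure of the positive chamber), then ⟨μ_j, Λ⟩ ≤ 0 for every j ∈ I. -/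
open scoped Classical

noncomputable section

local notation "⟪" x ", " y "⟫" => @inner ℝ _ _ x y

/-- Dual of an obtuse basis: if `(λ_i)` is an obtuse basis (`⟪λ_i, λ_j⟫ ≤ 0` for `i ≠ j`) with
dual basis `(μ_i)` (characterized by `⟪μ_i, λ_j⟫ = δ_{ij}`), then `⟪μ_i, μ_j⟫ ≥ 0` for all
`i, j`; consequently, if `⟪λ_i, Λ⟫ ≤ 0` for every `i`, then `⟪μ_j, Λ⟫ ≤ 0` for every `j`. -/
theorem dual_of_obtuse_basis
    {V : Type*} [NormedAddCommGroup V] [InnerProductSpace ℝ V] [FiniteDimensional ℝ V]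
    {I : Type*} [Fintype I] [DecidableEq I]
    (b : Module.Basis I ℝ V) (hobt : ∀ i j : I, i ≠ j → ⟪b i, b j⟫ ≤ 0)
    (mu : I → V) (hmu : ∀ i j : I, ⟪mu i, b j⟫ = if i = j then 1 else 0) :
    (∀ i j : I, 0 ≤ ⟪mu i, mu j⟫)
    ∧ ∀ Λ : V, (∀ i : I, ⟪b i, Λ⟫ ≤ 0) → ∀ j : I, ⟪mu j, Λ⟫ ≤ 0 := by
  -- inner product with `mu j` extracts the `j`-th coordinate
  have hrepr : ∀ (x : V) (j : I), ⟪mu j, x⟫ = b.repr x j := by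
    intro x j
    conv_lhs => rw [← b.sum_repr x]
    rw [inner_sum]
    simp [real_inner_smul_right, hmu, Finset.sum_ite_eq]
  have key : ∀ Λ : V, (∀ i : I, ⟪b i, Λ⟫ ≤ 0) → ∀ j : I, ⟪mu j, Λ⟫ ≤ 0 := by
    intro Λ hΛ j
    rw [hrepr]
    by_contra h
    push_neg at h
    set a : I → ℝ := fun i => b.repr Λ i with ha
    set S : Finset I := Finset.univ.filter (fun i => 0 < a i) with hS
    set P : V := ∑ i ∈ S, a i • b i with hP
    have hΛd : Λ = P + ∑ i ∈ Sᶜ, a i • b i := by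
      rw [hP, Finset.sum_add_sum_compl S fun i => a i • b i]
      exact (b.sum_repr Λ).symm
    have hPΛ : ⟪P, Λ⟫ ≤ 0 := by
      rw [hP, sum_inner]
      apply Finset.sum_nonpos
      intro i hi
      rw [real_inner_smul_left]
      have hai : 0 < a i := (Finset.mem_filter.mp hi).2
      exact mul_nonpos_of_nonneg_of_nonpos hai.le (hΛ i)
    have hrest : 0 ≤ ⟪P, ∑ i ∈ Sᶜ, a i • b i⟫ := by
      rw [hP, sum_inner]
      apply Finset.sum_nonneg
      intro i hi
      rw [real_inner_smul_left, inner_sum]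
      apply mul_nonneg (Finset.mem_filter.mp hi).2.le
      apply Finset.sum_nonneg
      intro k hk
      rw [real_inner_smul_right]
      have hik : i ≠ k := by
        intro hik
        exact (Finset.mem_compl.mp hk) (hik ▸ hi)
      have hak : ¬ (0 < a k) := by
        intro hak
        exact (Finset.mem_compl.mp hk) (Finset.mem_filter.mpr ⟨Finset.mem_univ k, hak⟩)
      push_neg at hak
      have := hobt i k hik
      nlinarith
    have hPP : ⟪P, P⟫ ≤ 0 := by
      have : ⟪P, Λ⟫ = ⟪P, P⟫ + ⟪P, ∑ i ∈ Sᶜ, a i • b i⟫ := by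
        rw [hΛd, inner_add_right]
      linarith
    have hP0 : P = 0 := by
      have := real_inner_self_nonpos.mp hPP
      exact this
    have hjS : j ∈ S := Finset.mem_filter.mpr ⟨Finset.mem_univ j, h⟩
    have : ⟪mu j, P⟫ = a j := by
      rw [hP, inner_sum]
      rw [Finset.sum_eq_single j]
      · rw [real_inner_smul_right, hmu]; simp
      · intro k hk hkj
        rw [real_inner_smul_right, hmu]
        simp [Ne.symm hkj]
      · intro hj; exact absurd hjS hj
    rw [hP0, inner_zero_right] at this
    exact absurd this.symm (ne_of_gt h)
  refine ⟨fun i j => ?_, key⟩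
  have hneg : ∀ k : I, ⟪b k, -(mu j)⟫ ≤ 0 := by
    intro k
    rw [inner_neg_right, real_inner_comm, hmu]
    by_cases hjk : j = k <;> simp [hjk]
  have := key (-(mu j)) hneg i
  rw [inner_neg_right] at this
  linarith
end
end
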